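/- Suppose that for every s = 0, …, k the NGD iterates satisfy λmin(G(s)) ≥ λ₀/2 and ‖u(s) - y‖₂ ≤ (1 - η/2)^s ‖u(0) - y‖₂. Then for every hidden unit r ∈ {1, …, m}, ‖w_r(k+1) - w_r(0)‖₂ ≤ 4√n·‖y - u(0)‖₂ / (√m · λ₀). -/

import Mathlib

open Matrix MeasureTheory ProbabilityTheory Real
open scoped BigOperators ENNReal NNReal

/-- Euclidean norm of a finitely-indexed real vector. -/
noncomputable def enorm2 {ι : Type*} [Fintype ι] (v : ι → ℝ) : ℝ :=
  Real.sqrt (∑ i, v i * v i)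

/-- Euclidean norm of a vector in `Fin n → ℝ`. -/
noncomputable def vnorm {n : ℕ} (v : Fin n → ℝ) : ℝ := Real.sqrt (v ⬝ᵥ v)

/-- Spectral norm (ℓ²-operator norm) of a matrix. -/
noncomputable def specNorm {ι κ : Type*} [Fintype ι] [Fintype κ] (A : Matrix ι κ ℝ) : ℝ :=
  sSup {r : ℝ | ∃ v : κ → ℝ, enorm2 v = 1 ∧ r = enorm2 (A *ᵥ v)}

/-- Smallest eigenvalue of a symmetric matrix, via the Rayleigh quotient. -/
noncomputable def lamMin {n : ℕ} (A : Matrix (Fin n) (Fin n) ℝ) : ℝ :=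
  sInf {r : ℝ | ∃ v : Fin n → ℝ, vnorm v = 1 ∧ r = v ⬝ᵥ (A *ᵥ v)}

/-- Largest eigenvalue of a symmetric matrix, via the Rayleigh quotient. -/
noncomputable def lamMax {n : ℕ} (A : Matrix (Fin n) (Fin n) ℝ) : ℝ :=
  sSup {r : ℝ | ∃ v : Fin n → ℝ, vnorm v = 1 ∧ r = v ⬝ᵥ (A *ᵥ v)}

/-- Output of the two-layer ReLU network `f(w,a,x) = (1/√m) ∑ᵣ aᵣ ReLU(wᵣᵀ x)` on each
of the `n` training inputs. -/
noncomputable def netOut {d n m : ℕ} (x : Fin n → Fin d → ℝ) (a : Fin m → ℝ)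
    (w : Fin m → Fin d → ℝ) : Fin n → ℝ :=
  fun i => (1 / Real.sqrt m) * ∑ r : Fin m, a r * max (w r ⬝ᵥ x i) 0

/-- Jacobian of `netOut` with respect to the first-layer weights: the `i`-th row is
`(1/√m) (a₁ 1{w₁ᵀxᵢ ≥ 0} xᵢᵀ, …, aₘ 1{wₘᵀxᵢ ≥ 0} xᵢᵀ)`. -/
noncomputable def jacNet {d n m : ℕ} (x : Fin n → Fin d → ℝ) (a : Fin m → ℝ)
    (w : Fin m → Fin d → ℝ) : Matrix (Fin n) (Fin m × Fin d) ℝ :=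
  Matrix.of fun i rj =>
    (1 / Real.sqrt m) * a rj.1 * (if 0 ≤ w rj.1 ⬝ᵥ x i then 1 else 0) * x i rj.2

/-- Gram matrix `G(w) = J(w) J(w)ᵀ`. -/
noncomputable def gramNet {d n m : ℕ} (x : Fin n → Fin d → ℝ) (a : Fin m → ℝ)
    (w : Fin m → Fin d → ℝ) : Matrix (Fin n) (Fin n) ℝ :=
  jacNet x a w * (jacNet x a w)ᵀ

/-- NGD iterates on the first-layer weights:
`w(k+1) = w(k) - η J(k)ᵀ G(k)⁻¹ (u(k) - y)`. -/
noncomputable def ngdNet {d n m : ℕ} (x : Fin n → Fin d → ℝ) (a : Fin m → ℝ)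
    (y : Fin n → ℝ) (η : ℝ) (w0 : Fin m → Fin d → ℝ) : ℕ → Fin m → Fin d → ℝ
  | 0 => w0
  | k + 1 => fun r j =>
      ngdNet x a y η w0 k r j -
        η * (((jacNet x a (ngdNet x a y η w0 k))ᵀ *ᵥ
          ((gramNet x a (ngdNet x a y η w0 k))⁻¹ *ᵥ
            (netOut x a (ngdNet x a y η w0 k) - y))) (r, j))

/-- Limiting Gram matrix `G^∞ᵢⱼ = xᵢᵀxⱼ (π - arccos(xᵢᵀxⱼ))/(2π)`. -/
noncomputable def ginf {d n : ℕ} (x : Fin n → Fin d → ℝ) : Matrix (Fin n) (Fin n) ℝ :=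
  Matrix.of fun i j => x i ⬝ᵥ x j * (Real.pi - Real.arccos (x i ⬝ᵥ x j)) / (2 * Real.pi)

/-- Euclidean norm on the full weight vector `w ∈ ℝ^{md}`. -/
noncomputable def wnorm {d m : ℕ} (w : Fin m → Fin d → ℝ) : ℝ :=
  Real.sqrt (∑ r : Fin m, w r ⬝ᵥ w r)

/-- Product Gaussian initialization measure: `wᵣ ~ N(0, ν² I_d)` i.i.d. -/
noncomputable def gaussInit (d m : ℕ) (ν : ℝ) : Measure (Fin m → Fin d → ℝ) :=
  Measure.pi fun _ : Fin m => Measure.pi fun _ : Fin d =>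
    gaussianReal 0 (Real.toNNReal (ν ^ 2))

/-- Uniform `{±1}` measure on ℝ. -/
noncomputable def signMeasure : Measure ℝ :=
  (PMF.uniformOfFinset ({-1, 1} : Finset ℝ) ⟨-1, by simp⟩).toMeasure

instance : IsProbabilityMeasure signMeasure := by
  unfold signMeasure; infer_instance

/-- Product uniform `{±1}` initialization measure for the output weights. -/
noncomputable def signInit (m : ℕ) : Measure (Fin m → ℝ) :=
  Measure.pi fun _ : Fin m => signMeasure

/-- Joint initialization measure over `(w(0), a)`. -/
noncomputable def initMeasure (d m : ℕ) (ν : ℝ) :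
    Measure ((Fin m → Fin d → ℝ) × (Fin m → ℝ)) :=
  (gaussInit d m ν).prod (signInit m)

/-! Each NGD step moves unit `r` by `η` times the `r`-th block of `J(s)ᵀ G(s)⁻¹ (u(s) - y)`.
That block of `J(s)ᵀ` has operator norm at most `√n / √m` because `|a_r| ≤ 1` and `‖xᵢ‖ ≤ 1`,
and `λmin(G(s)) ≥ λ₀/2` bounds `‖G(s)⁻¹‖` by `2/λ₀`. Since the residuals decay geometrically
with ratio `1 - η/2`, the steps sum to at most `η (√n/√m) (2/λ₀) ‖u(0) - y‖ (2/η)`. -/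

open Finset

section EuclideanNorm

variable {n : ℕ}

lemma vnorm_eq_norm_toLp (v : Fin n → ℝ) : vnorm v = ‖WithLp.toLp 2 v‖ := by
  simp [vnorm, EuclideanSpace.norm_eq, dotProduct, sq]

lemma vnorm_nonneg (v : Fin n → ℝ) : 0 ≤ vnorm v := Real.sqrt_nonneg _

lemma vnorm_eq_zero {v : Fin n → ℝ} : vnorm v = 0 ↔ v = 0 := by
  rw [vnorm_eq_norm_toLp, norm_eq_zero, WithLp.toLp_eq_zero]

lemma vnorm_sub_comm (v w : Fin n → ℝ) : vnorm (v - w) = vnorm (w - v) := by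
  simp only [vnorm_eq_norm_toLp, WithLp.toLp_sub, norm_sub_rev]

lemma vnorm_smul (c : ℝ) (v : Fin n → ℝ) : vnorm (c • v) = |c| * vnorm v := by
  rw [vnorm_eq_norm_toLp, vnorm_eq_norm_toLp, WithLp.toLp_smul, norm_smul, Real.norm_eq_abs]

lemma vnorm_sum_le {ι : Type*} (s : Finset ι) (f : ι → Fin n → ℝ) :
    vnorm (∑ i ∈ s, f i) ≤ ∑ i ∈ s, vnorm (f i) := by
  simpa only [vnorm_eq_norm_toLp, WithLp.toLp_sum] using norm_sum_le s _

lemma abs_dotProduct_le_vnorm_mul_vnorm (v w : Fin n → ℝ) : |v ⬝ᵥ w| ≤ vnorm v * vnorm w := by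
  have h := abs_real_inner_le_norm (WithLp.toLp 2 w) (WithLp.toLp 2 v)
  rwa [EuclideanSpace.inner_toLp_toLp, star_trivial, ← vnorm_eq_norm_toLp, ← vnorm_eq_norm_toLp,
    mul_comm] at h

lemma sum_abs_le_sqrt_mul_vnorm (v : Fin n → ℝ) : ∑ i, |v i| ≤ √n * vnorm v := by
  have h := abs_dotProduct_le_vnorm_mul_vnorm (fun i => |v i|) (fun _ => 1)
  have habs : vnorm (fun i => |v i|) = vnorm v := by simp [vnorm, dotProduct, abs_mul_abs_self]
  have hone : vnorm (fun _ : Fin n => (1 : ℝ)) = √n := by simp [vnorm, dotProduct]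
  rw [habs, hone, mul_comm] at h
  simpa [dotProduct] using (le_abs_self _).trans h

lemma vnorm_sub_le_sum_range (f : ℕ → Fin n → ℝ) (k : ℕ) :
    vnorm (f k - f 0) ≤ ∑ s ∈ range k, vnorm (f (s + 1) - f s) := by
  rw [← sum_range_sub]
  exact vnorm_sum_le _ _

end EuclideanNorm

section Rayleigh

variable {n : ℕ} (A : Matrix (Fin n) (Fin n) ℝ)

lemma bddBelow_rayleigh : BddBelow {r : ℝ | ∃ v : Fin n → ℝ, vnorm v = 1 ∧ r = v ⬝ᵥ (A *ᵥ v)} := by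
  have hcont : Continuous fun v : EuclideanSpace ℝ (Fin n) => v.ofLp ⬝ᵥ (A *ᵥ v.ofLp) := by
    fun_prop
  refine ((isCompact_sphere (0 : EuclideanSpace ℝ (Fin n)) 1).image hcont).bddBelow.mono ?_
  rintro r ⟨v, hv, rfl⟩
  exact ⟨WithLp.toLp 2 v, by simpa [vnorm_eq_norm_toLp] using hv, rfl⟩

lemma lamMin_mul_vnorm_sq_le (v : Fin n → ℝ) : lamMin A * vnorm v ^ 2 ≤ v ⬝ᵥ (A *ᵥ v) := by
  rcases (vnorm_nonneg v).eq_or_lt with h0 | hpos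
  · obtain rfl := vnorm_eq_zero.mp h0.symm
    simp [vnorm]
  set c := (vnorm v)⁻¹ with hc
  have hunit : vnorm (c • v) = 1 := by
    rw [vnorm_smul, abs_of_pos (inv_pos.mpr hpos), inv_mul_cancel₀ hpos.ne']
  have hray : lamMin A ≤ c ^ 2 * (v ⬝ᵥ (A *ᵥ v)) := by
    have := csInf_le (bddBelow_rayleigh A) ⟨c • v, hunit, rfl⟩
    rwa [mulVec_smul, smul_dotProduct, dotProduct_smul, smul_eq_mul, smul_eq_mul, ← mul_assoc,
      ← sq] at this
  calc lamMin A * vnorm v ^ 2 ≤ c ^ 2 * (v ⬝ᵥ (A *ᵥ v)) * vnorm v ^ 2 := by gcongr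
    _ = v ⬝ᵥ (A *ᵥ v) := by rw [hc]; field_simp

lemma lamMin_mul_vnorm_le_vnorm_mulVec (v : Fin n → ℝ) :
    lamMin A * vnorm v ≤ vnorm (A *ᵥ v) := by
  rcases (vnorm_nonneg v).eq_or_lt with h0 | hpos
  · rw [← h0, mul_zero]
    exact vnorm_nonneg _
  refine le_of_mul_le_mul_right ?_ hpos
  calc lamMin A * vnorm v * vnorm v = lamMin A * vnorm v ^ 2 := by ring
    _ ≤ v ⬝ᵥ (A *ᵥ v) := lamMin_mul_vnorm_sq_le A v
    _ ≤ |v ⬝ᵥ (A *ᵥ v)| := le_abs_self _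
    _ ≤ vnorm (A *ᵥ v) * vnorm v := by
      rw [mul_comm]
      exact abs_dotProduct_le_vnorm_mul_vnorm _ _

lemma isUnit_of_lamMin_pos (hA : 0 < lamMin A) : IsUnit A := by
  refine mulVec_injective_iff_isUnit.mp fun u v huv => ?_
  have h := lamMin_mul_vnorm_le_vnorm_mulVec A (u - v)
  rw [mulVec_sub, huv, sub_self, vnorm_eq_zero.mpr rfl] at h
  have hzero : vnorm (u - v) = 0 := le_antisymm
    (nonpos_of_mul_nonpos_right h hA) (vnorm_nonneg _)
  exact sub_eq_zero.mp (vnorm_eq_zero.mp hzero)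

lemma lamMin_mul_vnorm_inv_mulVec_le (hA : 0 < lamMin A) (v : Fin n → ℝ) :
    lamMin A * vnorm (A⁻¹ *ᵥ v) ≤ vnorm v := by
  have h := lamMin_mul_vnorm_le_vnorm_mulVec A (A⁻¹ *ᵥ v)
  rwa [mulVec_mulVec, mul_nonsing_inv A ((isUnit_iff_isUnit_det A).mp (isUnit_of_lamMin_pos A hA)),
    one_mulVec] at h

end Rayleigh

section Network

variable {d n m : ℕ} (x : Fin n → Fin d → ℝ) (a : Fin m → ℝ)

lemma jacNet_transpose_mulVec_block (w : Fin m → Fin d → ℝ) (r : Fin m) (v : Fin n → ℝ) :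
    (fun j => ((jacNet x a w)ᵀ *ᵥ v) (r, j)) =
      ∑ i, (1 / √m * a r * (if 0 ≤ w r ⬝ᵥ x i then 1 else 0) * v i) • x i := by
  ext j
  simp only [mulVec, transpose_apply, jacNet, of_apply, Finset.sum_apply, Pi.smul_apply,
    smul_eq_mul]
  simp only [dotProduct]
  exact sum_congr rfl fun i _ => by ring

lemma vnorm_jacNet_transpose_mulVec_block_le (hx : ∀ i, vnorm (x i) ≤ 1) (ha : ∀ r, |a r| ≤ 1)
    (w : Fin m → Fin d → ℝ) (r : Fin m) (v : Fin n → ℝ) :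
    vnorm (fun j => ((jacNet x a w)ᵀ *ᵥ v) (r, j)) ≤ √n / √m * vnorm v := by
  have hind : ∀ i, |(if 0 ≤ w r ⬝ᵥ x i then 1 else 0 : ℝ)| ≤ 1 := fun i => by split_ifs <;> simp
  rw [jacNet_transpose_mulVec_block]
  calc _ ≤ ∑ i, vnorm ((1 / √m * a r * (if 0 ≤ w r ⬝ᵥ x i then 1 else 0) * v i) • x i) :=
        vnorm_sum_le _ _
    _ ≤ ∑ i, 1 / √m * |v i| := by
      refine sum_le_sum fun i _ => ?_
      rw [vnorm_smul, abs_mul, abs_mul, abs_mul, abs_of_nonneg (by positivity : (0 : ℝ) ≤ 1 / √m)]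
      calc _ ≤ 1 / √m * 1 * 1 * |v i| * 1 := by
            gcongr
            exacts [vnorm_nonneg _, ha r, hind i, hx i]
        _ = _ := by ring
    _ ≤ 1 / √m * (√n * vnorm v) := by
      rw [← mul_sum]
      gcongr
      exact sum_abs_le_sqrt_mul_vnorm v
    _ = √n / √m * vnorm v := by ring

variable (y : Fin n → ℝ) (η : ℝ) (w0 : Fin m → Fin d → ℝ)

lemma ngdNet_succ_sub (s : ℕ) (r : Fin m) :
    ngdNet x a y η w0 (s + 1) r - ngdNet x a y η w0 s r =
      (-η) • fun j => ((jacNet x a (ngdNet x a y η w0 s))ᵀ *ᵥ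
        ((gramNet x a (ngdNet x a y η w0 s))⁻¹ *ᵥ (netOut x a (ngdNet x a y η w0 s) - y))) (r, j) := by
  ext j
  simp only [ngdNet, Pi.sub_apply, Pi.smul_apply, smul_eq_mul]
  ring

lemma vnorm_ngdNet_succ_sub_le (hx : ∀ i, vnorm (x i) ≤ 1) (ha : ∀ r, |a r| ≤ 1) (hη : 0 ≤ η)
    {s : ℕ} {μ : ℝ} (hμ : 0 < μ) (hG : μ ≤ lamMin (gramNet x a (ngdNet x a y η w0 s)))
    (r : Fin m) :
    vnorm (ngdNet x a y η w0 (s + 1) r - ngdNet x a y η w0 s r) ≤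
      η * (√n / √m) * (vnorm (netOut x a (ngdNet x a y η w0 s) - y) / μ) := by
  set G := gramNet x a (ngdNet x a y η w0 s)
  set res := netOut x a (ngdNet x a y η w0 s) - y
  have hinv : vnorm (G⁻¹ *ᵥ res) ≤ vnorm res / μ := by
    rw [le_div_iff₀ hμ, mul_comm]
    calc μ * vnorm (G⁻¹ *ᵥ res) ≤ lamMin G * vnorm (G⁻¹ *ᵥ res) := by
          gcongr
          exact vnorm_nonneg _
      _ ≤ vnorm res := lamMin_mul_vnorm_inv_mulVec_le G (hμ.trans_le hG) res
  rw [ngdNet_succ_sub, vnorm_smul, abs_neg, abs_of_nonneg hη]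
  calc _ ≤ η * (√n / √m * vnorm (G⁻¹ *ᵥ res)) :=
        mul_le_mul_of_nonneg_left (vnorm_jacNet_transpose_mulVec_block_le x a hx ha _ r _) hη
    _ ≤ η * (√n / √m * (vnorm res / μ)) := by gcongr
    _ = _ := by ring

end Network

lemma sum_range_one_sub_half_pow_le {η : ℝ} (hη0 : 0 < η) (hη2 : η ≤ 2) (k : ℕ) :
    ∑ s ∈ range k, (1 - η / 2) ^ s ≤ 2 / η := by
  have h := geom_sum_Ico_le_of_lt_one (m := 0) (n := k) (x := 1 - η / 2) (by linarith) (by linarith)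
  rwa [← range_eq_Ico, pow_zero, sub_sub_cancel, one_div_div] at h

theorem hidden_unit_close_to_init_general
    (d n m : ℕ) (x : Fin n → Fin d → ℝ) (a : Fin m → ℝ) (y : Fin n → ℝ)
    (hx : ∀ i, vnorm (x i) = 1)
    (ha : ∀ r, a r = 1 ∨ a r = -1)
    (hlam : 0 < lamMin (ginf x))
    (η : ℝ) (hη0 : 0 < η) (hη1 : η ≤ 1)
    (w0 : Fin m → Fin d → ℝ) (k : ℕ)
    (hG : ∀ s : ℕ, s ≤ k →
      lamMin (ginf x) / 2 ≤ lamMin (gramNet x a (ngdNet x a y η w0 s)))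
    (hres : ∀ s : ℕ, s ≤ k →
      vnorm (netOut x a (ngdNet x a y η w0 s) - y) ≤
        (1 - η / 2) ^ s * vnorm (netOut x a w0 - y)) :
    ∀ r : Fin m,
      vnorm (ngdNet x a y η w0 (k + 1) r - w0 r) ≤
        4 * Real.sqrt n * vnorm (y - netOut x a w0) /
          (Real.sqrt m * lamMin (ginf x)) := by
  intro r
  set L := lamMin (ginf x)
  set R₀ := vnorm (netOut x a w0 - y)
  have hR₀ : 0 ≤ R₀ := vnorm_nonneg _
  have hx' : ∀ i, vnorm (x i) ≤ 1 := fun i => (hx i).le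
  have ha' : ∀ r, |a r| ≤ 1 := fun r => by rcases ha r with h | h <;> simp [h]
  have hstep : ∀ s ∈ range (k + 1),
      vnorm (ngdNet x a y η w0 (s + 1) r - ngdNet x a y η w0 s r) ≤
        2 * η * √n * R₀ / (√m * L) * (1 - η / 2) ^ s := by
    intro s hs
    have hsk : s ≤ k := Nat.lt_succ_iff.mp (mem_range.mp hs)
    calc _ ≤ η * (√n / √m) * (vnorm (netOut x a (ngdNet x a y η w0 s) - y) / (L / 2)) :=
          vnorm_ngdNet_succ_sub_le x a y η w0 hx' ha' hη0.le (half_pos hlam) (hG s hsk) r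
      _ ≤ η * (√n / √m) * ((1 - η / 2) ^ s * R₀ / (L / 2)) := by gcongr; exact hres s hsk
      _ = _ := by field_simp
  calc _ ≤ ∑ s ∈ range (k + 1), vnorm (ngdNet x a y η w0 (s + 1) r - ngdNet x a y η w0 s r) :=
        vnorm_sub_le_sum_range (fun s => ngdNet x a y η w0 s r) (k + 1)
    _ ≤ ∑ s ∈ range (k + 1), 2 * η * √n * R₀ / (√m * L) * (1 - η / 2) ^ s := sum_le_sum hstep
    _ ≤ 2 * η * √n * R₀ / (√m * L) * (2 / η) := by
      rw [← mul_sum]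
      gcongr
      exact sum_range_one_sub_half_pow_le hη0 (by linarith) _
    _ = _ := by rw [vnorm_sub_comm]; field_simp; ring

/-- **Lemma (each hidden unit stays close to its initialization).**
If for every `s = 0, …, k` the NGD iterates satisfy `λmin(G(s)) ≥ λ₀/2` and
`‖u(s) - y‖ ≤ (1 - η/2)^s ‖u(0) - y‖`, then every hidden unit `r` satisfies
`‖wᵣ(k+1) - wᵣ(0)‖ ≤ 4√n ‖y - u(0)‖/(√m λ₀)`. -/
theorem hidden_unit_close_to_init
    (d n m : ℕ) (x : Fin n → Fin d → ℝ) (a : Fin m → ℝ) (y : Fin n → ℝ)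
    (hx : ∀ i, vnorm (x i) = 1)
    (ha : ∀ r, a r = 1 ∨ a r = -1)
    (hpar : ∀ i j, i ≠ j → ∀ cc : ℝ, x i ≠ cc • x j)
    (hlam : 0 < lamMin (ginf x))
    (η : ℝ) (hη0 : 0 < η) (hη1 : η ≤ 1)
    (w0 : Fin m → Fin d → ℝ) (k : ℕ)
    (hG : ∀ s : ℕ, s ≤ k →
      lamMin (ginf x) / 2 ≤ lamMin (gramNet x a (ngdNet x a y η w0 s)))
    (hres : ∀ s : ℕ, s ≤ k →
      vnorm (netOut x a (ngdNet x a y η w0 s) - y) ≤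
        (1 - η / 2) ^ s * vnorm (netOut x a w0 - y)) :
    ∀ r : Fin m,
      vnorm (ngdNet x a y η w0 (k + 1) r - w0 r) ≤
        4 * Real.sqrt n * vnorm (y - netOut x a w0) /
          (Real.sqrt m * lamMin (ginf x)) :=
  hidden_unit_close_to_init_general d n m x a y hx ha hlam η hη0 hη1 w0 k hG hres
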